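/- (Singularity criterion of type B, k = n; the key step of the main theorem for B_n/P(α_n).) Let n ≥ 2 and let a_1,…,a_n be nonnegative integers. Then for every integer t, there exists a positive root α ∈ Φ⁺_B with ⟨w(t), α⟩ = 0 if and only if t belongs to the step-matrix entry set S^B_{n,a}. -/

import Mathlib

/-! Since the `a_u` are nonnegative, the coordinates of `w(t)` strictly decrease, so no root
`eₚ - e_q` is orthogonal to it. The roots `eₚ + e_q` (`p < q`) and `eₚ` (read as `p = q`) pair
with `w(t)` to `w(t)ₚ + w(t)_q`, which is exactly the step-matrix entry in row `n - q`,
column `n - p` (zero-based `p`, `q`) minus `t`. -/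

open Finset

/-- The positive roots of type `Bₙ`: `eₚ+e_q`, `eₚ-e_q` (`p<q`) and `eₚ`. -/
def PhiB (n : ℕ) : Set (Fin n → ℝ) :=
  {α | ∃ p q : Fin n, p < q ∧
      α = fun i => (if i = p then (1:ℝ) else 0) + (if i = q then 1 else 0)} ∪
  {α | ∃ p q : Fin n, p < q ∧
      α = fun i => (if i = p then (1:ℝ) else 0) - (if i = q then 1 else 0)} ∪
  {α | ∃ p : Fin n, α = fun i => if i = p then (1:ℝ) else 0}

/-- Standard inner product on `ℝⁿ`. -/
noncomputable def ip (n : ℕ) (v w : Fin n → ℝ) : ℝ := ∑ i, v i * w i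

/-- The coordinate form of the weight `λ+ρ-tλ_n` for type `Bₙ`
(coordinates are indexed one-based). -/
noncomputable def wBn (n : ℕ) (a : ℕ → ℤ) (t : ℤ) : Fin n → ℝ := fun i =>
  (∑ u ∈ Icc (i.val + 1) (n - 1), (a u : ℝ)) + ((a n : ℝ) + 1) / 2
    + ((n : ℝ) - (i.val + 1)) - (t : ℝ) / 2

/-- The step-matrix entry set `S^B_{n,a}` (the case `k = n`). -/
def SBn (n : ℕ) (a : ℕ → ℤ) : Set ℚ :=
  {x | ∃ i j : ℕ, 1 ≤ i ∧ i ≤ j ∧ j ≤ n ∧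
    x = (∑ u ∈ Icc (n + 1 - i) (n - 1), (a u : ℚ))
      + (∑ u ∈ Icc (n + 1 - j) (n - 1), (a u : ℚ)) + (a n : ℚ) + i + j - 1}

/-- The entry in row `i`, column `j` of the step matrix `T^B_{n,λ}`. -/
def stepEntryB (n : ℕ) (a : ℕ → ℤ) (i j : ℕ) : ℚ :=
  (∑ u ∈ Icc (n + 1 - i) (n - 1), (a u : ℚ))
    + (∑ u ∈ Icc (n + 1 - j) (n - 1), (a u : ℚ)) + (a n : ℚ) + i + j - 1

lemma ip_single_add_single {n : ℕ} (w : Fin n → ℝ) (p q : Fin n) :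
    ip n w (fun i => (if i = p then (1:ℝ) else 0) + (if i = q then 1 else 0))
      = w p + w q := by
  simp [ip, mul_add, Finset.sum_add_distrib]

lemma ip_single_sub_single {n : ℕ} (w : Fin n → ℝ) (p q : Fin n) :
    ip n w (fun i => (if i = p then (1:ℝ) else 0) - (if i = q then 1 else 0))
      = w p - w q := by
  simp [ip, mul_sub, Finset.sum_sub_distrib]

lemma ip_single {n : ℕ} (w : Fin n → ℝ) (p : Fin n) :
    ip n w (fun i => if i = p then (1:ℝ) else 0) = w p := by
  simp [ip]

theorem exists_mem_PhiB_ip_eq_zero_iff {n : ℕ} {w : Fin n → ℝ} (hw : Function.Injective w) :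
    (∃ α ∈ PhiB n, ip n w α = 0) ↔ ∃ p q : Fin n, p ≤ q ∧ w p + w q = 0 := by
  constructor
  · rintro ⟨α, (⟨p, q, hpq, rfl⟩ | ⟨p, q, hpq, rfl⟩) | ⟨p, rfl⟩, hip⟩
    · exact ⟨p, q, hpq.le, by rwa [ip_single_add_single] at hip⟩
    · rw [ip_single_sub_single, sub_eq_zero] at hip
      exact absurd (hw hip) hpq.ne
    · rw [ip_single] at hip
      exact ⟨p, p, le_rfl, by rw [hip, add_zero]⟩
  · rintro ⟨p, q, hpq, h⟩
    rcases hpq.lt_or_eq with hlt | rfl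
    · exact ⟨_, Or.inl (Or.inl ⟨p, q, hlt, rfl⟩), by rwa [ip_single_add_single]⟩
    · exact ⟨_, Or.inr ⟨p, rfl⟩, by rw [ip_single]; linarith⟩

theorem wBn_strictAnti {n : ℕ} {a : ℕ → ℤ} (ha : ∀ u, 1 ≤ u → u < n → 0 ≤ a u) (t : ℤ) :
    StrictAnti (wBn n a t) := by
  intro p q hpq
  have hsum : ∑ u ∈ Icc (q.val + 1) (n - 1), (a u : ℝ) ≤ ∑ u ∈ Icc (p.val + 1) (n - 1), (a u : ℝ) :=
    sum_le_sum_of_subset_of_nonneg (Icc_subset_Icc (by omega) le_rfl) fun u hu _ => by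
      rw [mem_Icc] at hu
      exact_mod_cast ha u (by omega) (by omega)
  have hpq' : (p.val : ℝ) < q.val := by exact_mod_cast hpq
  simp only [wBn]
  linarith

theorem wBn_add_wBn (n : ℕ) (a : ℕ → ℤ) (t : ℤ) (p q : Fin n) :
    wBn n a t p + wBn n a t q = (stepEntryB n a (n - p) (n - q) : ℝ) - t := by
  have hp : n + 1 - (n - p.val) = p.val + 1 := by omega
  have hq : n + 1 - (n - q.val) = q.val + 1 := by omega
  simp only [wBn, stepEntryB, hp, hq]
  push_cast [Nat.cast_sub p.isLt.le, Nat.cast_sub q.isLt.le]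
  ring

theorem mem_SBn_iff {n : ℕ} {a : ℕ → ℤ} {x : ℚ} :
    x ∈ SBn n a ↔ ∃ p q : Fin n, p ≤ q ∧ x = stepEntryB n a (n - q) (n - p) := by
  constructor
  · rintro ⟨i, j, hi, hij, hjn, rfl⟩
    refine ⟨⟨n - j, by omega⟩, ⟨n - i, by omega⟩, Fin.mk_le_mk.2 (by omega), ?_⟩
    simp only [Nat.sub_sub_self (hij.trans hjn), Nat.sub_sub_self hjn]
    rfl
  · rintro ⟨p, q, hpq, rfl⟩
    exact ⟨n - q, n - p, by omega, by omega, by omega, rfl⟩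

theorem singular_criterion_B_eq_general (n : ℕ)
    (a : ℕ → ℤ) (ha : ∀ u, 1 ≤ u → u ≤ n → 0 ≤ a u) (t : ℤ) :
    (∃ α ∈ PhiB n, ip n (wBn n a t) α = 0) ↔ (t : ℚ) ∈ SBn n a := by
  rw [exists_mem_PhiB_ip_eq_zero_iff (wBn_strictAnti (fun u hu hun => ha u hu hun.le) t).injective,
    mem_SBn_iff]
  refine exists₂_congr fun p q => and_congr_right fun _ => ?_
  rw [add_comm, wBn_add_wBn, sub_eq_zero, eq_comm, ← Rat.cast_intCast, Rat.cast_inj]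

/-- Singularity criterion of type `B`, `k = n`: `λ+ρ-tλ_n` is singular iff `t` is an
entry of the step matrix `T^B_{n,λ}`. -/
theorem singular_criterion_B_eq (n : ℕ) (hn : 2 ≤ n)
    (a : ℕ → ℤ) (ha : ∀ u, 1 ≤ u → u ≤ n → 0 ≤ a u) (t : ℤ) :
    (∃ α ∈ PhiB n, ip n (wBn n a t) α = 0) ↔ (t : ℚ) ∈ SBn n a :=
  singular_criterion_B_eq_general n a ha t
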